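/- arXiv:2012.15385 — 6 statements merged into one kernel-verified Lean document; each statement's English description precedes it below -/
import Mathlib

section
/- Let f : X → Y be a mapping satisfying, for all x, y, z ∈ X, the inequality ‖f(x+y+αz) + f(x+y−αz) − 2f(x) − 2f(y)‖ ≤ ‖ρ₁(f(x+y+αz) − f(x+y) − f(αz))‖ + ‖ρ₂(f(x+y−αz) + f(−x) + f(αz−y))‖. Then f is additive, i.e., f(x+y) = f(x) + f(y) for all x, y ∈ X. -/
theorem stmt_0 {X Y : Type*} [NormedAddCommGroup X] [NormedSpace ℂ X]
    [NormedAddCommGroup Y] [NormedSpace ℂ Y] [CompleteSpace Y]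
    (α : ℝ) (hα : α ≠ 0) (ρ₁ ρ₂ : ℂ) (hρ : ‖ρ₁‖ + 3 * ‖ρ₂‖ < 2)
    (f : X → Y)
    (hf : ∀ x y z : X,
      ‖f (x + y + α • z) + f (x + y - α • z) - 2 • f x - 2 • f y‖ ≤
        ‖ρ₁ • (f (x + y + α • z) - f (x + y) - f (α • z))‖ +
        ‖ρ₂ • (f (x + y - α • z) + f (-x) + f (α • z - y))‖) :
    ∀ x y : X, f (x + y) = f x + f y := by
  have h0 : f 0 = 0 := by
    have h := hf 0 0 0
    rw [show (0:X) + 0 + α • (0:X) = 0 by simp,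
        show (0:X) + 0 - α • (0:X) = 0 by simp,
        show -(0:X) = 0 by simp,
        show α • (0:X) - 0 = 0 by simp,
        show (0:X) + 0 = 0 by simp,
        show α • (0:X) = 0 by simp] at h
    rw [show f 0 + f 0 - 2 • f 0 - 2 • f 0 = (-2 : ℂ) • f 0 by
          rw [two_smul]; module,
        show f 0 - f 0 - f 0 = (-1 : ℂ) • f 0 by module,
        show f 0 + f 0 + f 0 = (3 : ℂ) • f 0 by module] at h
    simp only [norm_smul] at h
    rw [show ‖(-2 : ℂ)‖ = 2 by simp, show ‖(-1 : ℂ)‖ = 1 by simp,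
        show ‖(3 : ℂ)‖ = 3 by simp] at h
    have : ‖f 0‖ = 0 := by
      nlinarith [norm_nonneg (f 0), norm_nonneg ρ₁, norm_nonneg ρ₂]
    simpa using this
  have hρ₂ : ‖ρ₂‖ < 2 := by nlinarith [norm_nonneg ρ₁, norm_nonneg ρ₂]
  have hodd : ∀ x : X, f (-x) = -f x := by
    intro x
    have h := hf x (-x) 0
    rw [show x + -x + α • (0:X) = 0 by simp,
        show x + -x - α • (0:X) = 0 by simp,
        show α • (0:X) - -x = x by simp,
        show x + -x = 0 by simp,
        show α • (0:X) = 0 by simp, h0] at h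
    rw [show (0:Y) + 0 - 2 • f x - 2 • f (-x) = (-2 : ℂ) • (f x + f (-x)) by
          rw [two_smul, two_smul]; module,
        show (0:Y) - 0 - 0 = (0 : ℂ) • f x by module,
        show (0:Y) + f (-x) + f x = (1 : ℂ) • (f x + f (-x)) by module] at h
    simp only [norm_smul] at h
    rw [show ‖(-2 : ℂ)‖ = 2 by simp, show ‖(0 : ℂ)‖ = 0 by simp,
        show ‖(1 : ℂ)‖ = 1 by simp] at h
    have : ‖f x + f (-x)‖ = 0 := by
      nlinarith [norm_nonneg (f x + f (-x))]
    have := norm_eq_zero.mp this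
    linear_combination (norm := abel) this
  intro x y
  have h := hf x y 0
  rw [show x + y + α • (0:X) = x + y by simp,
      show x + y - α • (0:X) = x + y by simp,
      show α • (0:X) - y = -y by simp,
      show α • (0:X) = 0 by simp,
      h0, hodd x, hodd y] at h
  rw [show f (x + y) + f (x + y) - 2 • f x - 2 • f y
        = (2 : ℂ) • (f (x + y) - f x - f y) by
        rw [two_smul, two_smul, two_smul]; module,
      show f (x + y) - f (x + y) - 0 = (0 : ℂ) • f x by module,
      show f (x + y) + -f x + -f y = (1 : ℂ) • (f (x + y) - f x - f y) by
        module] at h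
  simp only [norm_smul] at h
  rw [show ‖(2 : ℂ)‖ = 2 by simp, show ‖(0 : ℂ)‖ = 0 by simp,
      show ‖(1 : ℂ)‖ = 1 by simp] at h
  have : ‖f (x + y) - f x - f y‖ = 0 := by
    nlinarith [norm_nonneg (f (x + y) - f x - f y)]
  have := norm_eq_zero.mp this
  linear_combination (norm := abel) this
end

section
/- Let f : X → Y be a mapping satisfying, for all x, y, z ∈ X, the equality ‖f(x+y+αz) + f(x+y−αz) − 2f(x) − 2f(y)‖ = ‖ρ₁(f(x+y+αz) − f(x+y) − f(αz))‖ + ‖ρ₂(f(x+y−αz) + f(−x) + f(αz−y))‖. Then f is additive, i.e., f(x+y) = f(x) + f(y) for all x, y ∈ X. -/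
theorem stmt_1 {X Y : Type*} [NormedAddCommGroup X] [NormedSpace ℂ X]
    [NormedAddCommGroup Y] [NormedSpace ℂ Y] [CompleteSpace Y]
    (α : ℝ) (hα : α ≠ 0) (ρ₁ ρ₂ : ℂ) (hρ : ‖ρ₁‖ + 3 * ‖ρ₂‖ < 2)
    (f : X → Y)
    (hf : ∀ x y z : X,
      ‖f (x + y + α • z) + f (x + y - α • z) - 2 • f x - 2 • f y‖ =
        ‖ρ₁ • (f (x + y + α • z) - f (x + y) - f (α • z))‖ +
        ‖ρ₂ • (f (x + y - α • z) + f (-x) + f (α • z - y))‖) :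
    ∀ x y : X, f (x + y) = f x + f y := by
  have hρ2 : ‖ρ₂‖ < 2 := by nlinarith [norm_nonneg ρ₁, norm_nonneg ρ₂]
  have h0 : f 0 = 0 := by
    have h := hf 0 0 0
    simp only [smul_zero, add_zero, sub_zero, zero_add, neg_zero, zero_sub] at h
    rw [norm_smul, norm_smul] at h
    have e1 : f 0 + f 0 - 2 • f 0 - 2 • f 0 = -(2 • f 0) := by abel
    have e2 : f 0 - f 0 - f 0 = -f 0 := by abel
    have e3 : f 0 + f 0 + f 0 = (3 : ℕ) • f 0 := by
      rw [show (3:ℕ) = 2+1 by norm_num, add_smul, two_smul, one_smul]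
    rw [e1, e2, e3, norm_neg, norm_neg, RCLike.norm_nsmul ℂ, RCLike.norm_nsmul ℂ,
      nsmul_eq_mul, nsmul_eq_mul] at h
    push_cast at h
    have := norm_nonneg (f 0)
    have hn : ‖f 0‖ = 0 := by nlinarith
    simpa using hn
  have hodd : ∀ w : X, f (-w) = - f w := by
    intro w
    have h := hf 0 0 (α⁻¹ • w)
    have hw : α • (α⁻¹ • w) = w := by
      rw [smul_smul, mul_inv_cancel₀ hα, one_smul]
    rw [hw] at h
    simp only [zero_add, zero_sub, neg_zero, sub_zero, h0, smul_zero, add_zero] at h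
    rw [sub_self, smul_zero, norm_zero, zero_add, norm_smul] at h
    have hne : f w + f (-w) = 0 := by
      by_contra hne
      have hpos : 0 < ‖f w + f (-w)‖ := norm_pos_iff.mpr hne
      have hc : ‖f (-w) + f w‖ = ‖f w + f (-w)‖ := by rw [add_comm]
      rw [hc] at h
      nlinarith [norm_nonneg ρ₁, norm_nonneg ρ₂]
    exact (neg_eq_of_add_eq_zero_right hne).symm
  intro x y
  have h := hf x y 0
  simp only [smul_zero, add_zero, sub_zero, zero_sub, h0, hodd] at h
  have e1 : f (x + y) + f (x + y) - 2 • f x - 2 • f y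
      = (2 : ℕ) • (f (x + y) - f x - f y) := by
    rw [two_smul]; abel
  have e3 : f (x + y) + -f x + -f y = f (x + y) - f x - f y := by abel
  rw [e1, sub_self, smul_zero, norm_zero, zero_add, e3, RCLike.norm_nsmul ℂ,
    nsmul_eq_mul, norm_smul] at h
  push_cast at h
  have hd : f (x + y) - f x - f y = 0 := by
    by_contra hne
    have hpos : 0 < ‖f (x + y) - f x - f y‖ := norm_pos_iff.mpr hne
    nlinarith
  have : f (x + y) - (f x + f y) = 0 := by
    rw [show f (x+y) - (f x + f y) = f (x+y) - f x - f y by abel]; exact hd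
  exact sub_eq_zero.mp this
end

section
/- Let φ : X³ → [0, ∞) be a function with φ(0,0,0) = 0 such that lim_{j→∞} 2^{−j} φ(2^j x, 2^j y, 2^j z) = 0 for all x, y, z ∈ X, and such that the series φ̃(x) := Σ_{i=0}^{∞} (1/2^{i+1}) · (1/(2−|ρ₂|)) · ( φ(2^i x, 2^i x, 0) + (2|ρ₂|/(1−|ρ₂|)) · φ(0, 0, 2^i x / α) ) converges for all x ∈ X. Let f : X → Y be a mapping satisfying, for all x, y, z ∈ X, the inequality ‖f(x+y+αz) + f(x+y−αz) − 2f(x) − 2f(y)‖ ≤ ‖ρ₁(f(x+y+αz) − f(x+y) − f(αz))‖ + ‖ρ₂(f(x+y−αz) + f(−x) + f(αz−y))‖ + φ(x,y,z). Then there exists a unique additive mapping A : X → Y such that ‖f(x) − A(x)‖ ≤ φ̃(x) for all x ∈ X. -/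
open Filter Topology

theorem stmt_2 {X Y : Type*} [NormedAddCommGroup X] [NormedSpace ℂ X]
    [NormedAddCommGroup Y] [NormedSpace ℂ Y] [CompleteSpace Y]
    (α : ℝ) (hα : α ≠ 0) (ρ₁ ρ₂ : ℂ) (hρ : ‖ρ₁‖ + 3 * ‖ρ₂‖ < 2)
    (φ : X → X → X → ℝ) (hφ0 : ∀ x y z : X, 0 ≤ φ x y z) (hφ00 : φ 0 0 0 = 0)
    (hφlim : ∀ x y z : X, Filter.Tendsto
      (fun j : ℕ => (1 / 2 ^ j : ℝ) * φ ((2 : ℝ) ^ j • x) ((2 : ℝ) ^ j • y) ((2 : ℝ) ^ j • z))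
      Filter.atTop (nhds 0))
    (hφsum : ∀ x : X, Summable (fun i : ℕ =>
      (1 / 2 ^ (i + 1) : ℝ) * (1 / (2 - ‖ρ₂‖)) *
        (φ ((2 : ℝ) ^ i • x) ((2 : ℝ) ^ i • x) 0 +
          (2 * ‖ρ₂‖ / (1 - ‖ρ₂‖)) * φ 0 0 (((2 : ℝ) ^ i / α) • x))))
    (f : X → Y)
    (hf : ∀ x y z : X,
      ‖f (x + y + α • z) + f (x + y - α • z) - 2 • f x - 2 • f y‖ ≤
        ‖ρ₁ • (f (x + y + α • z) - f (x + y) - f (α • z))‖ +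
        ‖ρ₂ • (f (x + y - α • z) + f (-x) + f (α • z - y))‖ + φ x y z) :
    ∃! A : X → Y, (∀ x y : X, A (x + y) = A x + A y) ∧
      ∀ x : X, ‖f x - A x‖ ≤ ∑' i : ℕ,
        (1 / 2 ^ (i + 1) : ℝ) * (1 / (2 - ‖ρ₂‖)) *
          (φ ((2 : ℝ) ^ i • x) ((2 : ℝ) ^ i • x) 0 +
            (2 * ‖ρ₂‖ / (1 - ‖ρ₂‖)) * φ 0 0 (((2 : ℝ) ^ i / α) • x)) := by
  have hr10 : (0:ℝ) ≤ ‖ρ₁‖ := norm_nonneg _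
  have hr20 : (0:ℝ) ≤ ‖ρ₂‖ := norm_nonneg _
  have hr21 : ‖ρ₂‖ < 1 := by nlinarith
  have h1 : (0:ℝ) < 1 - ‖ρ₂‖ := by linarith
  have h2 : (0:ℝ) < 2 - ‖ρ₂‖ := by linarith
  have hpow0 : ∀ n : ℕ, (0:ℝ) < 2 ^ n := fun n => by positivity
  have hnorm2 : ∀ v : Y, ‖v + v‖ = 2 * ‖v‖ := fun v => by
    rw [← two_smul ℝ, norm_smul]; norm_num
  -- ψ and T
  set ψ : X → ℝ := fun u => (1 / (2 - ‖ρ₂‖)) *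
    (φ u u 0 + (2 * ‖ρ₂‖ / (1 - ‖ρ₂‖)) * φ 0 0 ((1/α) • u)) with hψ
  set T : X → ℕ → ℝ := fun x i => (1 / 2 ^ (i + 1) : ℝ) * (1 / (2 - ‖ρ₂‖)) *
        (φ ((2 : ℝ) ^ i • x) ((2 : ℝ) ^ i • x) 0 +
          (2 * ‖ρ₂‖ / (1 - ‖ρ₂‖)) * φ 0 0 (((2 : ℝ) ^ i / α) • x)) with hT
  have hTψ : ∀ (x : X) (i : ℕ), T x i = (1/2^(i+1) : ℝ) * ψ ((2:ℝ)^i • x) := by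
    intro x i
    simp only [hT, hψ]
    rw [smul_smul]
    have e : (1/α : ℝ) * (2:ℝ)^i = (2:ℝ)^i / α := by ring
    rw [e]
    ring
  have hsum : ∀ x : X, Summable (fun i => T x i) := by
    intro x; simp only [hT]; exact hφsum x
  -- f 0 = 0
  have hf0 : f 0 = 0 := by
    have h := hf 0 0 0
    simp only [smul_zero, add_zero, sub_zero, neg_zero, hφ00] at h
    set a := f 0 with ha
    have e1 : a + a - 2 • a - 2 • a = -(a + a) := by abel
    have e2 : a - a - a = -a := by abel
    rw [e1, e2, norm_neg, hnorm2, norm_smul, norm_neg] at h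
    have e3 : ‖ρ₂ • (a + a + a)‖ ≤ ‖ρ₂‖ * (‖a‖ + ‖a‖ + ‖a‖) := by
      rw [norm_smul]
      exact mul_le_mul_of_nonneg_left (norm_add₃_le) hr20
    have : ‖a‖ ≤ 0 := by nlinarith [norm_nonneg a]
    exact norm_le_zero_iff.mp this
  -- oddness defect
  have hodd : ∀ u : X, ‖f u + f (-u)‖ ≤ φ 0 0 ((1/α) • u) / (1 - ‖ρ₂‖) := by
    intro u
    have h := hf 0 0 ((1/α : ℝ) • u)
    have hu : α • ((1/α : ℝ) • u) = u := by
      rw [smul_smul, mul_one_div, div_self hα, one_smul]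
    rw [hu] at h
    simp only [zero_add, zero_sub, neg_zero, sub_zero, hf0, sub_self, smul_zero,
      norm_zero, add_zero] at h
    rw [norm_smul] at h
    have e : ‖f (-u) + f u‖ = ‖f u + f (-u)‖ := by rw [add_comm]
    rw [e] at h
    rw [le_div_iff₀ h1]
    linarith
  -- the master inequality
  have hmain : ∀ a b : X, 2 * ‖f (a + b) - f a - f b‖ ≤
      ‖ρ₂‖ * (‖f (a + b) - f a - f b‖ + ‖f a + f (-a)‖ + ‖f b + f (-b)‖) + φ a b 0 := by
    intro a b
    have h := hf a b 0
    simp only [smul_zero, add_zero, sub_zero, zero_sub, hf0, sub_self,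
      norm_zero, zero_add] at h
    have e1 : f (a + b) + f (a + b) - 2 • f a - 2 • f b =
        (f (a + b) - f a - f b) + (f (a + b) - f a - f b) := by abel
    have e2 : f (a + b) + f (-a) + f (-b) =
        (f (a + b) - f a - f b) + (f a + f (-a)) + (f b + f (-b)) := by abel
    rw [e1, e2, hnorm2, norm_smul] at h
    have e3 := norm_add₃_le (E := Y) (a := f (a + b) - f a - f b)
      (b := f a + f (-a)) (c := f b + f (-b))
    have e4 := mul_le_mul_of_nonneg_left e3 hr20
    linarith
  -- key estimate
  have hkey : ∀ u : X, ‖f (u + u) - (f u + f u)‖ ≤ ψ u := by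
    intro u
    have h := hmain u u
    have hO := hodd u
    have h3 : ‖ρ₂‖ * ‖f u + f (-u)‖ ≤ ‖ρ₂‖ * (φ 0 0 ((1/α) • u) / (1 - ‖ρ₂‖)) :=
      mul_le_mul_of_nonneg_left hO hr20
    have e : f (u + u) - (f u + f u) = f (u + u) - f u - f u := by abel
    rw [e]
    simp only [hψ]
    have e5 : (1 / (2 - ‖ρ₂‖)) *
        (φ u u 0 + (2 * ‖ρ₂‖ / (1 - ‖ρ₂‖)) * φ 0 0 ((1/α) • u)) =
        (φ u u 0 + 2 * (‖ρ₂‖ * (φ 0 0 ((1/α) • u) / (1 - ‖ρ₂‖)))) / (2 - ‖ρ₂‖) := by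
      field_simp
    rw [e5, le_div_iff₀ h2]
    nlinarith
  -- the approximating sequence
  set g : ℕ → X → Y := fun n x => (1/2^n : ℝ) • f ((2:ℝ)^n • x) with hg
  have hg0 : ∀ x : X, g 0 x = f x := by
    intro x; simp only [hg, pow_zero, one_smul]; norm_num
  have hdbl : ∀ (n : ℕ) (x : X), (2:ℝ)^(n+1) • x = (2:ℝ)^n • x + (2:ℝ)^n • x := by
    intro n x
    rw [pow_succ, mul_comm, mul_smul, two_smul]
  have hdist : ∀ (x : X) (n : ℕ), dist (g n x) (g (n+1) x) ≤ T x n := by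
    intro x n
    have e1 : g n x = (1/2^(n+1) : ℝ) • (f ((2:ℝ)^n • x) + f ((2:ℝ)^n • x)) := by
      rw [hg]
      simp only
      rw [← two_smul ℝ, smul_smul]
      congr 1
      rw [pow_succ]
      field_simp
    have e2 : g n x - g (n+1) x = (1/2^(n+1) : ℝ) •
        ((f ((2:ℝ)^n • x) + f ((2:ℝ)^n • x)) - f ((2:ℝ)^n • x + (2:ℝ)^n • x)) := by
      rw [smul_sub, ← e1, hg]
      simp only
      rw [hdbl n x]
    rw [dist_eq_norm, e2, norm_smul, hTψ x n]
    have e3 : ‖(1/2^(n+1) : ℝ)‖ = (1/2^(n+1) : ℝ) := by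
      rw [Real.norm_eq_abs, abs_of_pos (by positivity)]
    rw [e3]
    have e4 : ‖f ((2:ℝ)^n • x) + f ((2:ℝ)^n • x) - f ((2:ℝ)^n • x + (2:ℝ)^n • x)‖ =
        ‖f ((2:ℝ)^n • x + (2:ℝ)^n • x) - (f ((2:ℝ)^n • x) + f ((2:ℝ)^n • x))‖ := by
      rw [← norm_neg]; congr 1; abel
    rw [e4]
    exact mul_le_mul_of_nonneg_left (hkey ((2:ℝ)^n • x)) (by positivity)
  have hcauchy : ∀ x : X, CauchySeq (fun n => g n x) := fun x =>
    cauchySeq_of_dist_le_of_summable (T x) (hdist x) (hsum x)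
  choose A hA using fun x => cauchySeq_tendsto_of_complete (hcauchy x)
  -- the error bound
  have hbound : ∀ x : X, ‖f x - A x‖ ≤ ∑' i, T x i := by
    intro x
    have h := dist_le_tsum_of_dist_le_of_tendsto₀ (T x) (hdist x) (hsum x) (hA x)
    rwa [hg0 x, dist_eq_norm] at h
  -- additivity
  have hadd : ∀ x y : X, A (x + y) = A x + A y := by
    intro x y
    set u : ℕ → ℝ := fun n =>
      ‖f ((2:ℝ)^n • x + (2:ℝ)^n • y) - f ((2:ℝ)^n • x) - f ((2:ℝ)^n • y)‖ with hu
    set qx : ℕ → ℝ := fun n => φ 0 0 ((2:ℝ)^n • ((1/α : ℝ) • x)) with hqx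
    set qy : ℕ → ℝ := fun n => φ 0 0 ((2:ℝ)^n • ((1/α : ℝ) • y)) with hqy
    set p : ℕ → ℝ := fun n => φ ((2:ℝ)^n • x) ((2:ℝ)^n • y) 0 with hp
    have hun : ∀ n, 2 * u n ≤
        ‖ρ₂‖ * (u n + qx n / (1 - ‖ρ₂‖) + qy n / (1 - ‖ρ₂‖)) + p n := by
      intro n
      have h := hmain ((2:ℝ)^n • x) ((2:ℝ)^n • y)
      have hOx := hodd ((2:ℝ)^n • x)
      have hOy := hodd ((2:ℝ)^n • y)
      rw [smul_comm] at hOx hOy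
      have e : u n + ‖f ((2:ℝ)^n • x) + f (-((2:ℝ)^n • x))‖ +
          ‖f ((2:ℝ)^n • y) + f (-((2:ℝ)^n • y))‖ ≤
          u n + qx n / (1 - ‖ρ₂‖) + qy n / (1 - ‖ρ₂‖) := by
        simp only [hqx, hqy]
        gcongr <;> simpa using ‹_›
      have := mul_le_mul_of_nonneg_left e hr20
      simp only [hu, hp]
      linarith
    have hsc : ∀ n, 2 * ((1/2^n : ℝ) * u n) ≤
        ‖ρ₂‖ * ((1/2^n : ℝ) * u n) + (‖ρ₂‖ / (1 - ‖ρ₂‖)) * ((1/2^n : ℝ) * qx n) +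
          (‖ρ₂‖ / (1 - ‖ρ₂‖)) * ((1/2^n : ℝ) * qy n) + (1/2^n : ℝ) * p n := by
      intro n
      have hc : (0:ℝ) ≤ 1/2^n := by positivity
      have h := mul_le_mul_of_nonneg_left (hun n) hc
      have eL : 2 * ((1/2^n : ℝ) * u n) = (1/2^n : ℝ) * (2 * u n) := by ring
      have eR : (1/2^n : ℝ) * (‖ρ₂‖ * (u n + qx n / (1 - ‖ρ₂‖) + qy n / (1 - ‖ρ₂‖)) + p n) =
          ‖ρ₂‖ * ((1/2^n : ℝ) * u n) + (‖ρ₂‖ / (1 - ‖ρ₂‖)) * ((1/2^n : ℝ) * qx n) +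
            (‖ρ₂‖ / (1 - ‖ρ₂‖)) * ((1/2^n : ℝ) * qy n) + (1/2^n : ℝ) * p n := by
        ring
      rw [eL, ← eR]
      exact h
    -- limits
    have hDlim : Tendsto (fun n => g n (x+y) - g n x - g n y) atTop
        (𝓝 (A (x+y) - A x - A y)) := ((hA (x+y)).sub (hA x)).sub (hA y)
    have hgn : ∀ n, g n (x+y) - g n x - g n y = (1/2^n : ℝ) •
        (f ((2:ℝ)^n • x + (2:ℝ)^n • y) - f ((2:ℝ)^n • x) - f ((2:ℝ)^n • y)) := by
      intro n
      simp only [hg]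
      rw [smul_add ((2:ℝ)^n) x y, ← smul_sub, ← smul_sub]
    have hulim : Tendsto (fun n => (1/2^n : ℝ) * u n) atTop (𝓝 ‖A (x+y) - A x - A y‖) := by
      have e : (fun n => (1/2^n : ℝ) * u n) =
          fun n => ‖g n (x+y) - g n x - g n y‖ := by
        funext n
        rw [hgn n, norm_smul, Real.norm_eq_abs, abs_of_pos (by positivity)]
      rw [e]
      exact hDlim.norm
    have hqxlim : Tendsto (fun n => (1/2^n : ℝ) * qx n) atTop (𝓝 0) := by
      have := hφlim 0 0 ((1/α : ℝ) • x)
      simpa only [smul_zero] using this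
    have hqylim : Tendsto (fun n => (1/2^n : ℝ) * qy n) atTop (𝓝 0) := by
      have := hφlim 0 0 ((1/α : ℝ) • y)
      simpa only [smul_zero] using this
    have hplim : Tendsto (fun n => (1/2^n : ℝ) * p n) atTop (𝓝 0) := by
      simpa only [smul_zero] using hφlim x y 0
    have hL : Tendsto (fun n => 2 * ((1/2^n : ℝ) * u n)) atTop
        (𝓝 (2 * ‖A (x+y) - A x - A y‖)) := hulim.const_mul 2
    have hR : Tendsto (fun n =>
        ‖ρ₂‖ * ((1/2^n : ℝ) * u n) + (‖ρ₂‖ / (1 - ‖ρ₂‖)) * ((1/2^n : ℝ) * qx n) +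
          (‖ρ₂‖ / (1 - ‖ρ₂‖)) * ((1/2^n : ℝ) * qy n) + (1/2^n : ℝ) * p n) atTop
        (𝓝 (‖ρ₂‖ * ‖A (x+y) - A x - A y‖ + (‖ρ₂‖ / (1 - ‖ρ₂‖)) * 0 +
          (‖ρ₂‖ / (1 - ‖ρ₂‖)) * 0 + 0)) :=
      (((hulim.const_mul _).add (hqxlim.const_mul _)).add (hqylim.const_mul _)).add hplim
    have hfin := le_of_tendsto_of_tendsto' hL hR hsc
    have hD0 : ‖A (x+y) - A x - A y‖ ≤ 0 := by nlinarith [norm_nonneg (A (x+y) - A x - A y)]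
    have : A (x+y) - A x - A y = 0 := norm_le_zero_iff.mp hD0
    rwa [sub_sub, sub_eq_zero] at this
  -- main existence statement
  refine ⟨A, ⟨hadd, fun x => by simpa only [hT] using hbound x⟩, ?_⟩
  rintro A' ⟨hadd', hbound'⟩
  have hb' : ∀ u : X, ‖f u - A' u‖ ≤ ∑' i, T u i := fun u => by
    simpa only [hT] using hbound' u
  -- additive maps scale by 2^n
  have hAdd2 : ∀ (B : X → Y), (∀ x y : X, B (x + y) = B x + B y) →
      ∀ (n : ℕ) (x : X), B ((2:ℝ)^n • x) = (2:ℝ)^n • B x := by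
    intro B hB n x
    induction n with
    | zero => simp
    | succ n ih =>
      rw [hdbl n x, hB, ih, pow_succ, mul_comm ((2:ℝ)^n) 2, mul_smul, two_smul]
  have hTshift : ∀ (x : X) (n i : ℕ), (1/2^n : ℝ) * T ((2:ℝ)^n • x) i = T x (i + n) := by
    intro x n i
    simp only [hT]
    rw [smul_smul, smul_smul, ← pow_add]
    have e : ((2:ℝ)^i / α) * (2:ℝ)^n = (2:ℝ)^(i+n) / α := by
      rw [pow_add]; ring
    rw [e]
    ring
  have htail : ∀ (x : X) (n : ℕ),
      (1/2^n : ℝ) * ∑' i, T ((2:ℝ)^n • x) i = ∑' i, T x (i + n) := by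
    intro x n
    rw [← tsum_mul_left]
    exact tsum_congr fun i => hTshift x n i
  have hscale : ∀ (n : ℕ) (x : X), ‖A' x - A x‖ ≤ 2 * ∑' i, T x (i + n) := by
    intro n x
    have hv : ∀ (B : X → Y), (∀ x y : X, B (x + y) = B x + B y) →
        (1/2^n : ℝ) • B ((2:ℝ)^n • x) = B x := by
      intro B hB
      rw [hAdd2 B hB n x, smul_smul, one_div_mul_cancel (ne_of_gt (hpow0 n)), one_smul]
    have e1 : A' x - A x = (1/2^n : ℝ) • (A' ((2:ℝ)^n • x) - A ((2:ℝ)^n • x)) := by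
      rw [smul_sub, hv A' hadd', hv A hadd]
    have e2 : ‖A' ((2:ℝ)^n • x) - A ((2:ℝ)^n • x)‖ ≤ 2 * ∑' i, T ((2:ℝ)^n • x) i := by
      have ea : A' ((2:ℝ)^n • x) - A ((2:ℝ)^n • x) =
          (f ((2:ℝ)^n • x) - A ((2:ℝ)^n • x)) - (f ((2:ℝ)^n • x) - A' ((2:ℝ)^n • x)) := by
        abel
      have eb := norm_sub_le (f ((2:ℝ)^n • x) - A ((2:ℝ)^n • x))
        (f ((2:ℝ)^n • x) - A' ((2:ℝ)^n • x))
      rw [← ea] at eb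
      have h3 := hbound ((2:ℝ)^n • x)
      have h4 := hb' ((2:ℝ)^n • x)
      linarith
    calc ‖A' x - A x‖ = (1/2^n : ℝ) * ‖A' ((2:ℝ)^n • x) - A ((2:ℝ)^n • x)‖ := by
          rw [e1, norm_smul, Real.norm_eq_abs, abs_of_pos (by positivity)]
      _ ≤ (1/2^n : ℝ) * (2 * ∑' i, T ((2:ℝ)^n • x) i) :=
          mul_le_mul_of_nonneg_left e2 (by positivity)
      _ = 2 * ((1/2^n : ℝ) * ∑' i, T ((2:ℝ)^n • x) i) := by ring
      _ = 2 * ∑' i, T x (i + n) := by rw [htail]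
  funext x
  have ht : Tendsto (fun n => 2 * ∑' i, T x (i + n)) atTop (𝓝 (2 * 0)) :=
    (tendsto_sum_nat_add (T x)).const_mul 2
  have hle : ‖A' x - A x‖ ≤ 2 * 0 := ge_of_tendsto' ht fun n => hscale n x
  rw [mul_zero] at hle
  have := norm_le_zero_iff.mp hle
  exact sub_eq_zero.mp this
end

section
/- Let f : X → Y be a mapping satisfying, for all x, y, z ∈ X, the inequality ‖f(x+βy+αz) − f(x−αz) − βf(y) − 2f(αz)‖ ≤ ‖ρ₁(f(x+αz) − f(x) − f(αz))‖ + ‖ρ₂(f(x+βy−αz) − f(x) − βf(y) + f(αz))‖. Then f is additive, i.e., f(x+y) = f(x) + f(y) for all x, y ∈ X. -/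
theorem stmt_6 {X Y : Type*} [NormedAddCommGroup X] [NormedSpace ℂ X]
    [NormedAddCommGroup Y] [NormedSpace ℂ Y] [CompleteSpace Y]
    (α β : ℝ) (hα : α ≠ 0) (hβ : β ≠ 0) (ρ₁ ρ₂ : ℂ)
    (hρ2 : ‖ρ₂‖ < 1) (hρβ : ‖ρ₁‖ + ‖ρ₂‖ * |1 - β| < |β + 2|)
    (f : X → Y)
    (hf : ∀ x y z : X,
      ‖f (x + β • y + α • z) - f (x - α • z) - β • f y - 2 • f (α • z)‖ ≤
        ‖ρ₁ • (f (x + α • z) - f x - f (α • z))‖ +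
        ‖ρ₂ • (f (x + β • y - α • z) - f x - β • f y + f (α • z))‖) :
    ∀ x y : X, f (x + y) = f x + f y := by
  have h0 : f 0 = 0 := by
    have h := hf 0 0 0
    simp only [smul_zero, add_zero, sub_zero, zero_add] at h
    have e1 : f 0 - f 0 - β • f 0 - 2 • f 0 = -((β + 2) • f 0) := by
      push_cast
      module
    have e2 : f 0 - f 0 - f 0 = -(f 0) := by abel
    have e3 : f 0 - f 0 - β • f 0 + f 0 = (1 - β) • f 0 := by module
    rw [e1, e2, e3] at h
    simp only [norm_neg, norm_smul, smul_neg, Real.norm_eq_abs] at h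
    by_contra hne
    have hpos : 0 < ‖f 0‖ := norm_pos_iff.mpr hne
    nlinarith
  have hlin : ∀ x y : X, f (x + β • y) = f x + β • f y := by
    intro x y
    have h := hf x y 0
    simp only [smul_zero, add_zero, sub_zero, h0, norm_zero, zero_add, sub_self,
      mul_zero, norm_smul] at h
    have hnn := norm_nonneg (f (x + β • y) - f x - β • f y)
    have hA : ‖f (x + β • y) - f x - β • f y‖ = 0 := by nlinarith
    have := norm_eq_zero.mp hA
    rwa [sub_sub, sub_eq_zero] at this
  intro x y
  have h1 := hlin x (β⁻¹ • y)
  have h2 := hlin 0 (β⁻¹ • y)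
  rw [smul_inv_smul₀ hβ] at h1 h2
  rw [zero_add, h0, zero_add] at h2
  rw [h1, h2]
end

section
/- Let f : X → Y be a mapping satisfying, for all x, y, z ∈ X, the equality ‖f(x+βy+αz) − f(x−αz) − βf(y) − 2f(αz)‖ = ‖ρ₁(f(x+αz) − f(x) − f(αz))‖ + ‖ρ₂(f(x+βy−αz) − f(x) − βf(y) + f(αz))‖. Then f is additive, i.e., f(x+y) = f(x) + f(y) for all x, y ∈ X. -/
theorem stmt_7 {X Y : Type*} [NormedAddCommGroup X] [NormedSpace ℂ X]
    [NormedAddCommGroup Y] [NormedSpace ℂ Y] [CompleteSpace Y]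
    (α β : ℝ) (hα : α ≠ 0) (hβ : β ≠ 0) (ρ₁ ρ₂ : ℂ)
    (hρ2 : ‖ρ₂‖ < 1) (hρβ : ‖ρ₁‖ + ‖ρ₂‖ * |1 - β| < |β + 2|)
    (f : X → Y)
    (hf : ∀ x y z : X,
      ‖f (x + β • y + α • z) - f (x - α • z) - β • f y - 2 • f (α • z)‖ =
        ‖ρ₁ • (f (x + α • z) - f x - f (α • z))‖ +
        ‖ρ₂ • (f (x + β • y - α • z) - f x - β • f y + f (α • z))‖) :
    ∀ x y : X, f (x + y) = f x + f y := by
  have h0 : f 0 = 0 := by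
    have h := hf 0 0 0
    simp only [smul_zero, add_zero, sub_zero, sub_self, zero_sub, zero_add] at h
    have e1 : -(β • f 0) - 2 • f 0 = -((β + 2) • f 0) := by
      push_cast; module
    have e3 : -(β • f 0) + f 0 = (1 - β) • f 0 := by module
    rw [e1, e3] at h
    simp only [norm_neg, norm_smul, Real.norm_eq_abs] at h
    have hn : ‖f 0‖ = 0 := by nlinarith [norm_nonneg (f 0)]
    simpa using hn
  have key : ∀ x y : X, f (x + β • y) = f x + β • f y := by
    intro x y
    have h := hf x y 0
    simp only [smul_zero, add_zero, sub_zero, h0, sub_self] at h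
    rw [norm_zero, zero_add, norm_smul] at h
    have hA : ‖f (x + β • y) - f x - β • f y‖ = 0 := by
      nlinarith [norm_nonneg (f (x + β • y) - f x - β • f y)]
    have := norm_eq_zero.mp hA
    have : f (x + β • y) - f x - β • f y = 0 := this
    linear_combination (norm := abel1) this
  have fβ : ∀ y : X, f (β • y) = β • f y := by
    intro y
    have := key 0 y
    simpa [h0] using this
  intro x y
  have h1 := key x (β⁻¹ • y)
  rw [smul_inv_smul₀ hβ] at h1
  rw [h1, ← fβ (β⁻¹ • y), smul_inv_smul₀ hβ]
end

section
/- Assume |1+β| > 1. Let r > 1 and θ ≥ 0 be real numbers. Let f : X → Y be a mapping satisfying, for all x, y, z ∈ X, the inequality ‖f(x+βy+αz) − f(x−αz) − βf(y) − 2f(αz)‖ ≤ ‖ρ₁(f(x+αz) − f(x) − f(αz))‖ + ‖ρ₂(f(x+βy−αz) − f(x) − βf(y) + f(αz))‖ + θ(‖x‖^r + ‖y‖^r + ‖z‖^r). Then there exists a unique additive mapping A : X → Y such that ‖f(x) − A(x)‖ ≤ (2θ/(|1+β|^r − |1+β|)) · (1/(1−|ρ₂|)) · ‖x‖^r for all x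 ∈ X. -/
/-!
Setting `z = 0` kills the `ρ₁`-term and reduces the `ρ₂`-term to `|ρ₂|` times the left-hand
side, so `f` satisfies `‖f (x + β y) - f x - β f y‖ ≤ θ / (1 - |ρ₂|) (‖x‖ʳ + ‖y‖ʳ)`
(once `f 0 = 0` is read off from `x = y = z = 0`).
Taking `y = x` gives `‖f (c x) - c f x‖ ≤ δ ‖x‖ʳ` with `c = 1 + β`, and Hyers' direct method
applies: `cⁿ f (c⁻ⁿ x)` is Cauchy with steps of ratio `|c| / |c|ʳ < 1`, its limit `A` inherits
`A (x + β y) = A x + β A y`, hence is additive. Uniqueness holds because an additive map `D`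
bounded by `K ‖x‖ʳ` with `r > 1` satisfies `‖D x‖ = 2ⁿ ‖D (2⁻ⁿ x)‖ ≤ K (2 / 2ʳ)ⁿ ‖x‖ʳ → 0`.
-/

open Filter Topology

section Hyers

variable {E F : Type*} [NormedAddCommGroup E] [NormedSpace ℝ E]
  [NormedAddCommGroup F] [NormedSpace ℝ F]

lemma abs_pow_mul_norm_inv_pow_smul_rpow (c r : ℝ) (n : ℕ) (x : E) :
    |c| ^ n * ‖(c⁻¹) ^ n • x‖ ^ r = (|c| / |c| ^ r) ^ n * ‖x‖ ^ r := by
  rw [norm_smul, norm_pow, norm_inv, Real.norm_eq_abs,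
    Real.mul_rpow (by positivity) (norm_nonneg x), ← Real.rpow_pow_comm (by positivity),
    Real.inv_rpow (abs_nonneg c), ← mul_assoc, ← mul_pow, div_eq_mul_inv]

lemma div_rpow_lt_one {s r : ℝ} (hs : 1 < s) (hr : 1 < r) : s / s ^ r < 1 :=
  (div_lt_one (by positivity)).mpr (Real.self_lt_rpow_of_one_lt hs hr)

noncomputable def hyersSeq (c : ℝ) (f : E → F) (n : ℕ) (x : E) : F := c ^ n • f ((c⁻¹) ^ n • x)

variable {c r δ : ℝ} {f : E → F}

lemma dist_hyersSeq_succ_le (hc : c ≠ 0) (hf : ∀ x, ‖f (c • x) - c • f x‖ ≤ δ * ‖x‖ ^ r)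
    (x : E) (n : ℕ) :
    dist (hyersSeq c f n x) (hyersSeq c f (n + 1) x) ≤
      (δ / |c| * (|c| / |c| ^ r) * ‖x‖ ^ r) * (|c| / |c| ^ r) ^ n := by
  set y := (c⁻¹) ^ (n + 1) • x
  have hy : c • y = (c⁻¹) ^ n • x := by
    rw [smul_smul, pow_succ', ← mul_assoc, mul_inv_cancel₀ hc, one_mul]
  have hstep : hyersSeq c f n x - hyersSeq c f (n + 1) x = c ^ n • (f (c • y) - c • f y) := by
    rw [hyersSeq, hyersSeq, hy, pow_succ, smul_sub, smul_smul]
  have hcn : |c| ^ n * ‖y‖ ^ r = (|c| / |c| ^ r) ^ (n + 1) * ‖x‖ ^ r / |c| := by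
    rw [← abs_pow_mul_norm_inv_pow_smul_rpow c r, pow_succ, mul_right_comm,
      mul_div_cancel_right₀ _ (abs_pos.mpr hc).ne']
  calc dist (hyersSeq c f n x) (hyersSeq c f (n + 1) x)
      = |c| ^ n * ‖f (c • y) - c • f y‖ := by
        rw [dist_eq_norm, hstep, norm_smul, norm_pow, Real.norm_eq_abs]
    _ ≤ |c| ^ n * (δ * ‖y‖ ^ r) := by gcongr; exact hf y
    _ = _ := by rw [mul_left_comm, hcn]; ring

lemma map_add_smul_of_tendsto_hyersSeq (hc : 1 < |c|) (hr : 1 < r) {β ε : ℝ}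
    (hf : ∀ x y, ‖f (x + β • y) - f x - β • f y‖ ≤ ε * (‖x‖ ^ r + ‖y‖ ^ r))
    {A : E → F} (hA : ∀ x, Tendsto (fun n ↦ hyersSeq c f n x) atTop (𝓝 (A x))) (x y : E) :
    A (x + β • y) = A x + β • A y := by
  set q := |c| / |c| ^ r
  have hdefect : ∀ n : ℕ, ‖hyersSeq c f n (x + β • y) - hyersSeq c f n x - β • hyersSeq c f n y‖
      ≤ ε * (‖x‖ ^ r + ‖y‖ ^ r) * q ^ n := by
    intro n
    set u := (c⁻¹) ^ n • x
    set v := (c⁻¹) ^ n • y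
    have hsplit : hyersSeq c f n (x + β • y) - hyersSeq c f n x - β • hyersSeq c f n y =
        c ^ n • (f (u + β • v) - f u - β • f v) := by
      rw [hyersSeq, hyersSeq, hyersSeq, smul_add, smul_comm _ β y, smul_sub, smul_sub,
        smul_comm β (c ^ n)]
    calc _ = |c| ^ n * ‖f (u + β • v) - f u - β • f v‖ := by
          rw [hsplit, norm_smul, norm_pow, Real.norm_eq_abs]
      _ ≤ |c| ^ n * (ε * (‖u‖ ^ r + ‖v‖ ^ r)) := by gcongr; exact hf u v
      _ = _ := by
          rw [mul_left_comm, mul_add, abs_pow_mul_norm_inv_pow_smul_rpow c r n,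
            abs_pow_mul_norm_inv_pow_smul_rpow c r n]
          ring
  have hlim := ((hA (x + β • y)).sub (hA x)).sub ((hA y).const_smul β)
  have hzero : Tendsto (fun n ↦ ε * (‖x‖ ^ r + ‖y‖ ^ r) * q ^ n) atTop (𝓝 0) := by
    simpa using (tendsto_pow_atTop_nhds_zero_of_lt_one (by positivity)
      (div_rpow_lt_one hc hr)).const_mul (ε * (‖x‖ ^ r + ‖y‖ ^ r))
  have := tendsto_nhds_unique hlim (squeeze_zero_norm hdefect hzero)
  rwa [sub_sub, sub_eq_zero] at this

variable [CompleteSpace F]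

lemma exists_tendsto_hyersSeq (hc : 1 < |c|) (hr : 1 < r)
    (hf : ∀ x, ‖f (c • x) - c • f x‖ ≤ δ * ‖x‖ ^ r) (x : E) :
    ∃ a, Tendsto (fun n ↦ hyersSeq c f n x) atTop (𝓝 a) ∧
      ‖f x - a‖ ≤ δ / (|c| ^ r - |c|) * ‖x‖ ^ r := by
  have hc0 : c ≠ 0 := abs_pos.mp (one_pos.trans hc)
  have hq := div_rpow_lt_one hc hr
  have hsteps := dist_hyersSeq_succ_le hc0 hf x
  obtain ⟨a, ha⟩ := cauchySeq_tendsto_of_complete (cauchySeq_of_le_geometric _ _ hq hsteps)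
  refine ⟨a, ha, ?_⟩
  have hbound := dist_le_of_le_geometric_of_tendsto₀ _ _ hq hsteps ha
  rw [hyersSeq, pow_zero, one_smul, pow_zero, one_smul, dist_eq_norm] at hbound
  refine hbound.trans_eq ?_
  have : 0 < |c| ^ r - |c| := sub_pos.mpr (Real.self_lt_rpow_of_one_lt hc hr)
  field_simp

end Hyers

lemma map_add_of_map_add_smul {K E F : Type*} [DivisionRing K] [AddCommGroup E] [Module K E]
    [AddCommGroup F] [Module K F] {β : K} (hβ : β ≠ 0) {A : E → F}
    (hA : ∀ x y, A (x + β • y) = A x + β • A y) (x y : E) : A (x + y) = A x + A y := by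
  have hA0 : A 0 = 0 := by
    have h := hA 0 0
    rw [smul_zero, add_zero, left_eq_add] at h
    exact (smul_eq_zero.mp h).resolve_left hβ
  have h := hA 0 (β⁻¹ • y)
  rw [zero_add, hA0, zero_add] at h
  rw [← smul_inv_smul₀ hβ y, hA, h]

lemma AddMonoidHom.eq_zero_of_norm_le_rpow {E F : Type*} [NormedAddCommGroup E]
    [NormedSpace ℝ E] [NormedAddCommGroup F] [NormedSpace ℝ F] (D : E →+ F) {K r : ℝ}
    (hr : 1 < r) (hD : ∀ x, ‖D x‖ ≤ K * ‖x‖ ^ r) : D = 0 := by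
  ext x
  have hq : (2 : ℝ) / 2 ^ r < 1 := div_rpow_lt_one one_lt_two hr
  have hbound : ∀ n : ℕ, ‖D x‖ ≤ K * ‖x‖ ^ r * (2 / 2 ^ r) ^ n := by
    intro n
    set y := ((2 : ℝ)⁻¹) ^ n • x
    have hx : x = (2 ^ n : ℕ) • y := by
      rw [← Nat.cast_smul_eq_nsmul ℝ, smul_smul, Nat.cast_pow, Nat.cast_ofNat, ← mul_pow,
        mul_inv_cancel₀ two_ne_zero, one_pow, one_smul]
    calc ‖D x‖ = 2 ^ n * ‖D y‖ := by
          rw [hx, map_nsmul, RCLike.norm_nsmul ℝ, nsmul_eq_mul, Nat.cast_pow, Nat.cast_ofNat]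
      _ ≤ 2 ^ n * (K * ‖y‖ ^ r) := by gcongr; exact hD y
      _ = _ := by
          have hy := abs_pow_mul_norm_inv_pow_smul_rpow 2 r n x
          rw [abs_two] at hy
          rw [mul_left_comm, hy]; ring
  have hzero : Tendsto (fun n ↦ K * ‖x‖ ^ r * (2 / 2 ^ r) ^ n) atTop (𝓝 0) := by
    simpa using (tendsto_pow_atTop_nhds_zero_of_lt_one (by positivity) hq).const_mul
      (K * ‖x‖ ^ r)
  exact norm_le_zero_iff.mp (ge_of_tendsto' hzero hbound)

theorem exists_unique_add_norm_sub_le_of_norm_map_add_smul_sub_le {E F : Type*}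
    [NormedAddCommGroup E] [NormedSpace ℝ E] [NormedAddCommGroup F] [NormedSpace ℝ F]
    [CompleteSpace F] {β r ε : ℝ} (hβ : β ≠ 0) (hβ1 : 1 < |1 + β|) (hr : 1 < r) {f : E → F}
    (hf : ∀ x y, ‖f (x + β • y) - f x - β • f y‖ ≤ ε * (‖x‖ ^ r + ‖y‖ ^ r)) :
    ∃! A : E → F, (∀ x y, A (x + y) = A x + A y) ∧
      ∀ x, ‖f x - A x‖ ≤ 2 * ε / (|1 + β| ^ r - |1 + β|) * ‖x‖ ^ r := by
  have hscale : ∀ x, ‖f ((1 + β) • x) - (1 + β) • f x‖ ≤ 2 * ε * ‖x‖ ^ r := fun x ↦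
    calc ‖f ((1 + β) • x) - (1 + β) • f x‖ = ‖f (x + β • x) - f x - β • f x‖ := by
          rw [add_smul, one_smul, add_smul, one_smul, sub_sub]
      _ ≤ ε * (‖x‖ ^ r + ‖x‖ ^ r) := hf x x
      _ = 2 * ε * ‖x‖ ^ r := by ring
  choose A hA hfA using exists_tendsto_hyersSeq hβ1 hr hscale
  have hadd := map_add_of_map_add_smul hβ (map_add_smul_of_tendsto_hyersSeq hβ1 hr hf hA)
  refine ⟨A, ⟨hadd, hfA⟩, fun A' ⟨hadd', hfA'⟩ ↦ funext fun x ↦ ?_⟩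
  have hD := (AddMonoidHom.mk' A' hadd' - AddMonoidHom.mk' A hadd).eq_zero_of_norm_le_rpow hr
    (K := 2 * (2 * ε / (|1 + β| ^ r - |1 + β|))) fun x ↦ by
      calc ‖A' x - A x‖ = ‖(f x - A x) - (f x - A' x)‖ := by congr 1; abel
        _ ≤ ‖f x - A x‖ + ‖f x - A' x‖ := norm_sub_le _ _
        _ ≤ _ := by linarith [hfA x, hfA' x]
  exact sub_eq_zero.mp (DFunLike.congr_fun hD x)

section Reduction

variable {X Y : Type*} [NormedAddCommGroup X] [NormedSpace ℝ X]
  [NormedAddCommGroup Y] [NormedSpace ℂ Y] {α β r θ : ℝ} {ρ₁ ρ₂ : ℂ} {f : X → Y}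

lemma map_zero_of_functional_ineq (hρβ : ‖ρ₁‖ + ‖ρ₂‖ * |1 - β| < |β + 2|) (hr : 0 < r)
    (hf : ∀ x y z : X,
      ‖f (x + β • y + α • z) - f (x - α • z) - β • f y - 2 • f (α • z)‖ ≤
        ‖ρ₁ • (f (x + α • z) - f x - f (α • z))‖ +
        ‖ρ₂ • (f (x + β • y - α • z) - f x - β • f y + f (α • z))‖ +
        θ * (‖x‖ ^ r + ‖y‖ ^ r + ‖z‖ ^ r)) :
    f 0 = 0 := by
  have h := hf 0 0 0
  simp only [smul_zero, add_zero, sub_zero, norm_zero, Real.zero_rpow hr.ne', mul_zero] at h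
  have hlhs : f 0 - f 0 - β • f 0 - 2 • f 0 = -((β + 2) • f 0) := by module
  have hρ₁ : f 0 - f 0 - f 0 = -f 0 := by abel
  have hρ₂ : f 0 - f 0 - β • f 0 + f 0 = (1 - β) • f 0 := by module
  rw [hlhs, hρ₁, hρ₂, norm_neg, smul_neg, norm_neg, norm_smul, norm_smul, norm_smul,
    norm_smul, Real.norm_eq_abs, Real.norm_eq_abs] at h
  exact norm_le_zero_iff.mp (by nlinarith [norm_nonneg (f 0)])

lemma norm_map_add_smul_sub_le_of_functional_ineq (hρ2 : ‖ρ₂‖ < 1)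
    (hρβ : ‖ρ₁‖ + ‖ρ₂‖ * |1 - β| < |β + 2|) (hr : 0 < r)
    (hf : ∀ x y z : X,
      ‖f (x + β • y + α • z) - f (x - α • z) - β • f y - 2 • f (α • z)‖ ≤
        ‖ρ₁ • (f (x + α • z) - f x - f (α • z))‖ +
        ‖ρ₂ • (f (x + β • y - α • z) - f x - β • f y + f (α • z))‖ +
        θ * (‖x‖ ^ r + ‖y‖ ^ r + ‖z‖ ^ r)) (x y : X) :
    ‖f (x + β • y) - f x - β • f y‖ ≤ θ / (1 - ‖ρ₂‖) * (‖x‖ ^ r + ‖y‖ ^ r) := by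
  have h := hf x y 0
  simp only [smul_zero, add_zero, sub_zero, map_zero_of_functional_ineq hρβ hr hf, sub_self,
    norm_zero, Real.zero_rpow hr.ne', norm_smul] at h
  rw [div_mul_eq_mul_div, le_div_iff₀ (sub_pos.mpr hρ2)]
  linarith

end Reduction

theorem stmt_11_general {X Y : Type*} [NormedAddCommGroup X] [NormedSpace ℂ X]
    [NormedAddCommGroup Y] [NormedSpace ℂ Y] [CompleteSpace Y]
    (α β : ℝ) (hβ : β ≠ 0) (hβ1 : 1 < |1 + β|) (ρ₁ ρ₂ : ℂ)
    (hρ2 : ‖ρ₂‖ < 1) (hρβ : ‖ρ₁‖ + ‖ρ₂‖ * |1 - β| < |β + 2|)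
    (r θ : ℝ) (hr : 1 < r)
    (f : X → Y)
    (hf : ∀ x y z : X,
      ‖f (x + β • y + α • z) - f (x - α • z) - β • f y - 2 • f (α • z)‖ ≤
        ‖ρ₁ • (f (x + α • z) - f x - f (α • z))‖ +
        ‖ρ₂ • (f (x + β • y - α • z) - f x - β • f y + f (α • z))‖ +
        θ * (‖x‖ ^ r + ‖y‖ ^ r + ‖z‖ ^ r)) :
    ∃! A : X → Y, (∀ x y : X, A (x + y) = A x + A y) ∧
      ∀ x : X, ‖f x - A x‖ ≤
        (2 * θ / (|1 + β| ^ r - |1 + β|)) * (1 / (1 - ‖ρ₂‖)) * ‖x‖ ^ r := by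
  have hcauchy := norm_map_add_smul_sub_le_of_functional_ineq hρ2 hρβ (zero_lt_one.trans hr) hf
  convert exists_unique_add_norm_sub_le_of_norm_map_add_smul_sub_le hβ hβ1 hr hcauchy
    using 6
  ring

theorem stmt_11 {X Y : Type*} [NormedAddCommGroup X] [NormedSpace ℂ X]
    [NormedAddCommGroup Y] [NormedSpace ℂ Y] [CompleteSpace Y]
    (α β : ℝ) (hα : α ≠ 0) (hβ : β ≠ 0) (hβ1 : 1 < |1 + β|) (ρ₁ ρ₂ : ℂ)
    (hρ2 : ‖ρ₂‖ < 1) (hρβ : ‖ρ₁‖ + ‖ρ₂‖ * |1 - β| < |β + 2|)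
    (r θ : ℝ) (hr : 1 < r) (hθ : 0 ≤ θ)
    (f : X → Y)
    (hf : ∀ x y z : X,
      ‖f (x + β • y + α • z) - f (x - α • z) - β • f y - 2 • f (α • z)‖ ≤
        ‖ρ₁ • (f (x + α • z) - f x - f (α • z))‖ +
        ‖ρ₂ • (f (x + β • y - α • z) - f x - β • f y + f (α • z))‖ +
        θ * (‖x‖ ^ r + ‖y‖ ^ r + ‖z‖ ^ r)) :
    ∃! A : X → Y, (∀ x y : X, A (x + y) = A x + A y) ∧
      ∀ x : X, ‖f x - A x‖ ≤
        (2 * θ / (|1 + β| ^ r - |1 + β|)) * (1 / (1 - ‖ρ₂‖)) * ‖x‖ ^ r :=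
  stmt_11_general α β hβ hβ1 ρ₁ ρ₂ hρ2 hρβ r θ hr f hf
end
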